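/- Let S ∈ M_l(R) be symmetric and let L, R ∈ M_l(R) satisfy ‖L − I_l‖ ≤ δ and ‖R − I_l‖ ≤ δ with δ < 1/4. Then for every eigenvalue λ ∈ C of the matrix L S R, one has Re(λ) ≤ C · max{0, ν_max(S)} + C' δ ‖S‖ for suitable constants; in particular, if ν_max(S) ≤ 0 then Re(λ) ≤ C'' δ ‖S‖, where ν_max(S) is the largest eigenvalue of S. More precisely, if v ≠ 0 is an eigenvector of LSR with eigenvalue λ, then λ = ⟨S R v, R v̄⟩ / ⟨L^{−1} v, R v̄⟩, the numerator satisfies Re⟨S R v, R v̄⟩ ≤ ν_max(S)|Rv|², and |⟨L^{−1} v, R v̄⟩ − |v|²| ≤ C δ |v|². -/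

import Mathlib

/-!
Pairing `M v = λ v` with `v̄` and splitting `v = a + i b` gives
`Re λ · |v|² = ⟨M a, a⟩ + ⟨M b, b⟩` for a real matrix `M`, so `Re λ` is bounded by any bound
on the real quadratic form of `M`. For `M = L S R` and `w = R u`,
`⟨L S w, u⟩ = ⟨S w, w⟩ - ⟨S w, w - u⟩ + ⟨(L - 1) S w, u⟩`: the first term is at most
`max 0 ν |w|²`, and the other two are `O(δ s |u|²)` because `L` and `R` are `δ`-close to the
identity.
-/

open Matrix
open scoped InnerProductSpace

theorem real_inner_twist_self_le {E : Type*} [NormedAddCommGroup E] [InnerProductSpace ℝ E]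
    {L S R : E → E} {δ ν s : ℝ} (hδ : 0 ≤ δ) (hs : 0 ≤ s)
    (hL : ∀ x, ‖L x - x‖ ≤ δ * ‖x‖) (hR : ∀ x, ‖R x - x‖ ≤ δ * ‖x‖)
    (hν : ∀ x, ⟪S x, x⟫_ℝ ≤ ν * ‖x‖ ^ 2) (hS : ∀ x, ‖S x‖ ≤ s * ‖x‖) (u : E) :
    ⟪L (S (R u)), u⟫_ℝ ≤ (max 0 ν * (1 + δ) ^ 2 + 2 * δ * (1 + δ) * s) * ‖u‖ ^ 2 := by
  set w := R u
  set z := S w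
  have hw : ‖w‖ ≤ (1 + δ) * ‖u‖ := by
    linarith [norm_le_norm_add_norm_sub' w u, hR u]
  have hz : ‖z‖ ≤ s * (1 + δ) * ‖u‖ := by
    rw [mul_assoc]; exact (hS w).trans (mul_le_mul_of_nonneg_left hw hs)
  have hsplit : ⟪L z, u⟫_ℝ = ⟪z, w⟫_ℝ - ⟪z, w - u⟫_ℝ + ⟪L z - z, u⟫_ℝ := by
    rw [inner_sub_right, inner_sub_left]; ring
  have hform : ⟪z, w⟫_ℝ ≤ max 0 ν * ((1 + δ) ^ 2 * ‖u‖ ^ 2) := calc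
    ⟪z, w⟫_ℝ ≤ ν * ‖w‖ ^ 2 := hν w
    _ ≤ max 0 ν * ‖w‖ ^ 2 := by gcongr; exact le_max_right 0 ν
    _ ≤ max 0 ν * ((1 + δ) * ‖u‖) ^ 2 := by gcongr
    _ = max 0 ν * ((1 + δ) ^ 2 * ‖u‖ ^ 2) := by ring
  have hright : -⟪z, w - u⟫_ℝ ≤ s * (1 + δ) * ‖u‖ * (δ * ‖u‖) := calc
    -⟪z, w - u⟫_ℝ ≤ ‖z‖ * ‖w - u‖ := (neg_le_abs _).trans (abs_real_inner_le_norm _ _)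
    _ ≤ s * (1 + δ) * ‖u‖ * (δ * ‖u‖) := by gcongr; exact hR u
  have hleft : ⟪L z - z, u⟫_ℝ ≤ δ * (s * (1 + δ) * ‖u‖) * ‖u‖ := calc
    ⟪L z - z, u⟫_ℝ ≤ ‖L z - z‖ * ‖u‖ := real_inner_le_norm _ _
    _ ≤ δ * ‖z‖ * ‖u‖ := by gcongr; exact hL z
    _ ≤ δ * (s * (1 + δ) * ‖u‖) * ‖u‖ := by gcongr
  rw [hsplit]
  linarith

theorem re_star_dotProduct_map_mulVec {n : Type*} [Fintype n] (M : Matrix n n ℝ) (v : n → ℂ) :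
    (star v ⬝ᵥ (M.map (↑) *ᵥ v)).re =
      (M *ᵥ fun i => (v i).re) ⬝ᵥ (fun i => (v i).re) +
        (M *ᵥ fun i => (v i).im) ⬝ᵥ (fun i => (v i).im) := by
  simp only [dotProduct, mulVec, Complex.re_sum, Complex.mul_re, Complex.mul_im,
    map_apply, Pi.star_apply, Complex.star_def, Complex.conj_re, Complex.conj_im,
    Complex.ofReal_re, Complex.ofReal_im, zero_mul, sub_zero, add_zero, neg_mul, sub_neg_eq_add,
    Finset.mul_sum, Finset.sum_mul, ← Finset.sum_add_distrib]
  refine Finset.sum_congr rfl fun i _ => Finset.sum_congr rfl fun j _ => ?_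
  ring

open scoped ComplexOrder in
theorem re_le_of_map_mulVec_eq_smul {n : Type*} [Fintype n] {M : Matrix n n ℝ} {c : ℝ}
    (hM : ∀ u, (M *ᵥ u) ⬝ᵥ u ≤ c * (u ⬝ᵥ u)) {lam : ℂ} {v : n → ℂ} (hv : v ≠ 0)
    (heig : M.map (↑) *ᵥ v = lam • v) : lam.re ≤ c := by
  set a : n → ℝ := fun i => (v i).re
  set b : n → ℝ := fun i => (v i).im
  have hpos : 0 < star v ⬝ᵥ v := dotProduct_star_self_pos_iff.mpr hv
  have hre : (star v ⬝ᵥ v).re = a ⬝ᵥ a + b ⬝ᵥ b := by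
    classical
    simpa using re_star_dotProduct_map_mulVec 1 v
  have him : (star v ⬝ᵥ v).im = 0 := (Complex.pos_iff.mp hpos).2.symm
  have hquad : lam.re * (star v ⬝ᵥ v).re = (M *ᵥ a) ⬝ᵥ a + (M *ᵥ b) ⬝ᵥ b := by
    rw [← re_star_dotProduct_map_mulVec, heig, dotProduct_smul, smul_eq_mul, Complex.mul_re, him]
    ring
  refine le_of_mul_le_mul_right ?_ (Complex.pos_iff.mp hpos).1
  rw [hquad, hre]
  linarith [hM a, hM b]

section Euclidean

variable {n : Type*} [Fintype n]

theorem EuclideanSpace.real_inner_toLp_toLp (x y : n → ℝ) :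
    ⟪(WithLp.toLp 2 x : EuclideanSpace ℝ n), WithLp.toLp 2 y⟫_ℝ = x ⬝ᵥ y := by
  rw [EuclideanSpace.inner_toLp_toLp, star_trivial, dotProduct_comm]

theorem EuclideanSpace.norm_toLp_sq (x : n → ℝ) :
    ‖(WithLp.toLp 2 x : EuclideanSpace ℝ n)‖ ^ 2 = x ⬝ᵥ x := by
  rw [← real_inner_self_eq_norm_sq, EuclideanSpace.real_inner_toLp_toLp]

theorem EuclideanSpace.norm_toLp_le_of_dotProduct_le {x y : n → ℝ} {c : ℝ} (hc : 0 ≤ c)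
    (h : x ⬝ᵥ x ≤ c ^ 2 * (y ⬝ᵥ y)) :
    ‖(WithLp.toLp 2 x : EuclideanSpace ℝ n)‖ ≤ c * ‖(WithLp.toLp 2 y : EuclideanSpace ℝ n)‖ := by
  rwa [← pow_le_pow_iff_left₀ (norm_nonneg _) (by positivity) two_ne_zero, mul_pow,
    EuclideanSpace.norm_toLp_sq, EuclideanSpace.norm_toLp_sq]

variable [DecidableEq n]

theorem Matrix.norm_toEuclideanLin_sub_le {A : Matrix n n ℝ} {δ : ℝ} (hδ : 0 ≤ δ)
    (hA : ∀ v, ((A - 1) *ᵥ v) ⬝ᵥ ((A - 1) *ᵥ v) ≤ δ ^ 2 * (v ⬝ᵥ v))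
    (x : EuclideanSpace ℝ n) : ‖toEuclideanLin A x - x‖ ≤ δ * ‖x‖ := by
  obtain ⟨v⟩ := x
  simpa [sub_mulVec] using EuclideanSpace.norm_toLp_le_of_dotProduct_le hδ (hA v)

theorem Matrix.norm_toEuclideanLin_le {A : Matrix n n ℝ} {s : ℝ} (hs : 0 ≤ s)
    (hA : ∀ v, (A *ᵥ v) ⬝ᵥ (A *ᵥ v) ≤ s ^ 2 * (v ⬝ᵥ v))
    (x : EuclideanSpace ℝ n) : ‖toEuclideanLin A x‖ ≤ s * ‖x‖ := by
  obtain ⟨v⟩ := x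
  simpa using EuclideanSpace.norm_toLp_le_of_dotProduct_le hs (hA v)

theorem Matrix.inner_toEuclideanLin_self_le {A : Matrix n n ℝ} {ν : ℝ}
    (hA : ∀ v, (A *ᵥ v) ⬝ᵥ v ≤ ν * (v ⬝ᵥ v))
    (x : EuclideanSpace ℝ n) : ⟪toEuclideanLin A x, x⟫_ℝ ≤ ν * ‖x‖ ^ 2 := by
  obtain ⟨v⟩ := x
  simpa [EuclideanSpace.real_inner_toLp_toLp, EuclideanSpace.norm_toLp_sq] using hA v

end Euclidean

/-- eigenvalue bound for near-identity twists of a symmetric matrix: there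
is a constant `C > 0` (depending only on `l`) such that if `S` is real symmetric,
`‖L - I‖, ‖R - I‖ ≤ δ < 1/4`, `ν_max(S) ≤ ν` and `‖S‖ ≤ s`, then every (complex)
eigenvalue `λ` of `L S R` satisfies `Re λ ≤ C (max{0, ν} + δ s)`. -/
theorem eigenvalue_real_part_bound (l : ℕ) :
    ∃ C > 0, ∀ (S L R : Matrix (Fin l) (Fin l) ℝ) (δ ν s : ℝ),
      S.IsSymm → 0 ≤ δ → δ < 1 / 4 → 0 ≤ s →
      (∀ v : Fin l → ℝ,
        ((L - 1).mulVec v) ⬝ᵥ ((L - 1).mulVec v) ≤ δ ^ 2 * (v ⬝ᵥ v)) →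
      (∀ v : Fin l → ℝ,
        ((R - 1).mulVec v) ⬝ᵥ ((R - 1).mulVec v) ≤ δ ^ 2 * (v ⬝ᵥ v)) →
      (∀ v : Fin l → ℝ, (S.mulVec v) ⬝ᵥ v ≤ ν * (v ⬝ᵥ v)) →
      (∀ v : Fin l → ℝ, (S.mulVec v) ⬝ᵥ (S.mulVec v) ≤ s ^ 2 * (v ⬝ᵥ v)) →
      ∀ (lam : ℂ) (v : Fin l → ℂ), v ≠ 0 →
        ((L * S * R).map (fun x => (x : ℂ))).mulVec v = lam • v →
        lam.re ≤ C * (max 0 ν + δ * s) := by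
  refine ⟨4, by norm_num, fun S L R δ ν s _ hδ hδ4 hs hL hR hν hS lam v hv heig => ?_⟩
  refine re_le_of_map_mulVec_eq_smul (fun u => ?_) hv heig
  have hquad := real_inner_twist_self_le hδ hs (Matrix.norm_toEuclideanLin_sub_le hδ hL)
    (Matrix.norm_toEuclideanLin_sub_le hδ hR) (Matrix.inner_toEuclideanLin_self_le hν)
    (Matrix.norm_toEuclideanLin_le hs hS) (WithLp.toLp 2 u)
  simp only [Matrix.toLpLin_toLp, toLin'_apply, mulVec_mulVec, ← Matrix.mul_assoc,
    EuclideanSpace.real_inner_toLp_toLp, EuclideanSpace.norm_toLp_sq] at hquad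
  have hcoef : max 0 ν * (1 + δ) ^ 2 + 2 * δ * (1 + δ) * s ≤ 4 * (max 0 ν + δ * s) := by
    have hsq : (1 + δ) ^ 2 ≤ 4 := by nlinarith
    nlinarith [mul_le_mul_of_nonneg_left hsq (le_max_left 0 ν),
      mul_nonneg (mul_nonneg hδ hs) (sub_nonneg.2 hδ4.le)]
  exact hquad.trans (mul_le_mul_of_nonneg_right hcoef (dotProduct_self_star_nonneg u))
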